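/- Theorem (complementarity criterion): Let R₁ ∈ ℝ[z,z⁻¹]^{m×n} and R₂ ∈ ℝ[z,z⁻¹]^{p×n} be Laurent polynomial matrices with full row normal ranks m and p, respectively. Let 𝓔₁ be the σ-algebra of Borel subsets of (ℝⁿ)^ℤ that are saturated with respect to ker∞R₁, and 𝓔₂ the σ-algebra of Borel subsets saturated with respect to ker∞R₂. Then 𝓔₁ and 𝓔₂ are complementary if and only if the stacked (m+p)×n Laurent polynomial matrix [R₁; R₂] has normal rank m+p. -/

import Mathlib

open Pointwise

/-- The shift operator `R(σ)` associated with a Laurent polynomial matrix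
`R ∈ ℝ[z,z⁻¹]^{p×n}`: `(R(σ)w)(t)ᵢ = Σⱼ Σ_k coeff_k(Rᵢⱼ) · w(t+k)ⱼ`. -/
noncomputable def shiftOp {p n : ℕ} (R : Matrix (Fin p) (Fin n) (LaurentPolynomial ℝ))
    (w : ℤ → Fin n → ℝ) : ℤ → Fin p → ℝ :=
  fun t i => ∑ j, Finsupp.sum (AddMonoidAlgebra.coeff (R i j)) fun k c => c * w (t + k) j

/-- The normal rank of a Laurent polynomial matrix: its rank as a matrix over the field of
fractions of `ℝ[z,z⁻¹]`. -/
noncomputable def normalRank {m : Type*} [Fintype m] {n : ℕ}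
    (R : Matrix m (Fin n) (LaurentPolynomial ℝ)) : ℕ :=
  Matrix.rank (R.map (algebraMap (LaurentPolynomial ℝ) (FractionRing (LaurentPolynomial ℝ))))




noncomputable def shiftEnd : Multiplicative ℤ →* Module.End ℝ (ℤ → ℝ) where
  toFun k := { toFun := fun x t => x (t + k.toAdd),
               map_add' := by intros; rfl,
               map_smul' := by intros; rfl }
  map_one' := by ext x t; simp
  map_mul' := by
    intro j k; ext x t
    simp only [Module.End.mul_apply]
    show x (t + (j.toAdd + k.toAdd)) = x (t + j.toAdd + k.toAdd); rw [add_assoc]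

noncomputable def actA : LaurentPolynomial ℝ →ₐ[ℝ] Module.End ℝ (ℤ → ℝ) :=
  AddMonoidAlgebra.lift ℝ _ ℤ shiftEnd

lemma actA_apply (a : LaurentPolynomial ℝ) (x : ℤ → ℝ) (t : ℤ) :
    actA a x t = a.coeff.sum fun k c => c * x (t + k) := by
  induction a using AddMonoidAlgebra.induction_linear with
  | zero => simp
  | add f g hf hg =>
      have : actA (f + g) = actA f + actA g := map_add _ _ _
      rw [this]
      simp only [LinearMap.add_apply, Pi.add_apply, hf, hg, AddMonoidAlgebra.coeff_add]
      rw [Finsupp.sum_add_index (by intros; simp) (by intros; simp [add_mul])]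
  | single k c =>
      rw [AddMonoidAlgebra.coeff_single]
      rw [actA, AddMonoidAlgebra.lift_single, Finsupp.sum_single_index (by simp)]
      simp [shiftEnd]

lemma shiftOp_eq {p n : ℕ} (R : Matrix (Fin p) (Fin n) (LaurentPolynomial ℝ))
    (w : ℤ → Fin n → ℝ) (t : ℤ) (i : Fin p) :
    shiftOp R w t i = ∑ j, actA (R i j) (fun s => w s j) t := by
  simp [shiftOp, actA_apply]

lemma shiftOp_mul {q r n : ℕ} (M : Matrix (Fin q) (Fin r) (LaurentPolynomial ℝ))
    (N : Matrix (Fin r) (Fin n) (LaurentPolynomial ℝ)) (w : ℤ → Fin n → ℝ) :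
    shiftOp (M * N) w = shiftOp M (shiftOp N w) := by
  funext t i
  rw [shiftOp_eq, shiftOp_eq]
  have hcol : ∀ c : Fin r, (fun s => shiftOp N w s c) =
      ∑ j, actA (N c j) (fun s => w s j) := by
    intro c; funext s; rw [shiftOp_eq]; simp [Finset.sum_apply]
  calc ∑ j, actA ((M * N) i j) (fun s => w s j) t
      = ∑ j, ∑ c, (actA (M i c) * actA (N c j)) (fun s => w s j) t := by
        congr 1; funext j
        rw [Matrix.mul_apply, map_sum]
        simp only [map_mul]
        rw [LinearMap.coe_sum, Finset.sum_apply, Finset.sum_apply]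
    _ = ∑ c, ∑ j, actA (M i c) (actA (N c j) (fun s => w s j)) t := by
        rw [Finset.sum_comm]; rfl
    _ = ∑ c, actA (M i c) (fun s => shiftOp N w s c) t := by
        congr 1; funext c
        rw [hcol, map_sum]
        exact (Finset.sum_apply _ _ _).symm

lemma shiftOp_add {p n : ℕ} (R : Matrix (Fin p) (Fin n) (LaurentPolynomial ℝ))
    (w w' : ℤ → Fin n → ℝ) :
    shiftOp R (w + w') = shiftOp R w + shiftOp R w' := by
  funext t i
  simp only [shiftOp, Pi.add_apply, mul_add]
  rw [← Finset.sum_add_distrib]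
  congr 1; funext j
  rw [← Finsupp.sum_add]

lemma shiftOp_smul {p n : ℕ} (R : Matrix (Fin p) (Fin n) (LaurentPolynomial ℝ))
    (c : ℝ) (w : ℤ → Fin n → ℝ) :
    shiftOp R (c • w) = c • shiftOp R w := by
  funext t i
  simp only [shiftOp, Pi.smul_apply, smul_eq_mul]
  rw [Finset.mul_sum]
  congr 1; funext j
  rw [Finsupp.mul_sum]
  congr 1; funext k d; ring

lemma shiftOp_zero_w {p n : ℕ} (R : Matrix (Fin p) (Fin n) (LaurentPolynomial ℝ)) :
    shiftOp R 0 = 0 := by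
  funext t i
  simp [shiftOp]

lemma shiftOp_neg {p n : ℕ} (R : Matrix (Fin p) (Fin n) (LaurentPolynomial ℝ))
    (w : ℤ → Fin n → ℝ) : shiftOp R (-w) = - shiftOp R w := by
  funext t i
  simp only [shiftOp, Pi.neg_apply, mul_neg]
  rw [← Finset.sum_neg_distrib]
  congr 1; funext j
  rw [← Finsupp.sum_neg]

lemma shiftOp_matneg {p n : ℕ} (R : Matrix (Fin p) (Fin n) (LaurentPolynomial ℝ))
    (w : ℤ → Fin n → ℝ) : shiftOp (-R) w = - shiftOp R w := by
  funext t i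
  simp only [shiftOp_eq, Matrix.neg_apply, map_neg, LinearMap.neg_apply, Pi.neg_apply]
  rw [← Finset.sum_neg_distrib]

lemma shiftOp_sub {p n : ℕ} (R : Matrix (Fin p) (Fin n) (LaurentPolynomial ℝ))
    (w w' : ℤ → Fin n → ℝ) :
    shiftOp R (w - w') = shiftOp R w - shiftOp R w' := by
  rw [sub_eq_add_neg, shiftOp_add, shiftOp_neg, sub_eq_add_neg]

noncomputable def posRec (c : ℕ → ℝ) (N : ℕ) (y : ℤ → ℝ) : ℕ → ℝ
  | s =>
    if h : s < N then 0
    else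
      (y ((s : ℤ) - N) - ∑ k ∈ (Finset.range N).attach,
        c k.1 * posRec c N y (s - N + k.1)) / c N
  decreasing_by
    have hk := Finset.mem_range.mp k.2
    omega

noncomputable def negRec (c : ℕ → ℝ) (N : ℕ) (y : ℤ → ℝ) : ℕ → ℝ
  | j =>
    (y (-1 - j) - ∑ k ∈ (Finset.Icc 1 N).attach,
      c k.1 * (if h : k.1 ≤ j then negRec c N y (j - k.1)
               else posRec c N y (k.1 - j - 1))) / c 0
  decreasing_by
    have hk := Finset.mem_Icc.mp k.2
    omega

lemma core_surj (c : ℕ → ℝ) (N : ℕ) (h0 : c 0 ≠ 0) (hN : c N ≠ 0) (y : ℤ → ℝ) :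
    ∃ x : ℤ → ℝ, ∀ t : ℤ, ∑ k ∈ Finset.range (N + 1), c k * x (t + k) = y t := by
  classical
  set x : ℤ → ℝ := fun t => if 0 ≤ t then posRec c N y t.toNat
    else negRec c N y (-1 - t).toNat with hx
  refine ⟨x, ?_⟩
  have hxpos : ∀ s : ℤ, 0 ≤ s → x s = posRec c N y s.toNat := by
    intro s hs; simp [hx, hs]
  have hxneg : ∀ j : ℕ, x (-1 - j) = negRec c N y j := by
    intro j
    have h1 : ¬ (0 ≤ (-1 - j : ℤ)) := by omega
    have h2 : ((-1 : ℤ) - (-1 - (j:ℤ))).toNat = j := by omega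
    simp only [hx, if_neg h1, h2]
  intro t
  by_cases ht : 0 ≤ t
  · -- positive case
    have key : posRec c N y (t.toNat + N) =
        (y ((t.toNat + N : ℕ) - (N:ℤ)) - ∑ k ∈ (Finset.range N).attach,
          c k.1 * posRec c N y (t.toNat + N - N + k.1)) / c N := by
      rw [posRec]
      simp [Nat.not_lt.mpr (Nat.le_add_left N t.toNat)]
    have hsimp : ((t.toNat + N : ℕ) : ℤ) - (N : ℤ) = t := by omega
    have hidx : t.toNat + N - N = t.toNat := by omega
    rw [hsimp, hidx] at key
    have hxk : ∀ k : ℕ, x (t + k) = posRec c N y (t.toNat + k) := by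
      intro k
      have : (0:ℤ) ≤ t + k := by omega
      rw [hxpos _ this]
      congr 1; omega
    rw [Finset.sum_range_succ]
    simp only [hxk]
    rw [key]
    have hsum : ∑ k ∈ (Finset.range N).attach, c k.1 * posRec c N y (t.toNat + k.1)
        = ∑ k ∈ Finset.range N, c k * posRec c N y (t.toNat + k) :=
      Finset.sum_attach (Finset.range N) (fun k => c k * posRec c N y (t.toNat + k))
    rw [← hsum]
    field_simp
    ring
  · -- negative case
    set j : ℕ := (-1 - t).toNat with hj
    have htj : t = -1 - (j : ℤ) := by omega
    have key : negRec c N y j =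
        (y (-1 - j) - ∑ k ∈ (Finset.Icc 1 N).attach,
          c k.1 * (if k.1 ≤ j then negRec c N y (j - k.1)
                   else posRec c N y (k.1 - j - 1))) / c 0 := by
      rw [negRec]; simp only [dite_eq_ite]
    have hxk : ∀ k : ℕ, 1 ≤ k → k ≤ N → x (t + k) =
        (if k ≤ j then negRec c N y (j - k) else posRec c N y (k - j - 1)) := by
      intro k hk1 hkN
      by_cases hkj : k ≤ j
      · have : t + k = -1 - ((j - k : ℕ) : ℤ) := by omega
        rw [this, hxneg, if_pos hkj]
      · have h0k : (0:ℤ) ≤ t + k := by omega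
        rw [hxpos _ h0k, if_neg hkj]
        congr 1; omega
    have hx0 : x t = negRec c N y j := by rw [htj, hxneg]
    have hsplit : Finset.range (N + 1) = insert 0 (Finset.Icc 1 N) := by
      ext a; simp [Finset.mem_range, Finset.mem_Icc]; omega
    rw [hsplit, Finset.sum_insert (by simp)]
    have : ∑ k ∈ Finset.Icc 1 N, c k * x (t + k) =
        ∑ k ∈ Finset.Icc 1 N, c k *
          (if k ≤ j then negRec c N y (j - k) else posRec c N y (k - j - 1)) := by
      apply Finset.sum_congr rfl
      intro k hk
      rw [Finset.mem_Icc] at hk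
      rw [hxk k hk.1 hk.2]
    rw [this]
    have hsum : ∑ k ∈ (Finset.Icc 1 N).attach,
        c k.1 * (if k.1 ≤ j then negRec c N y (j - k.1) else posRec c N y (k.1 - j - 1))
        = ∑ k ∈ Finset.Icc 1 N,
          c k * (if k ≤ j then negRec c N y (j - k) else posRec c N y (k - j - 1)) :=
      Finset.sum_attach (Finset.Icc 1 N)
        (fun k => c k * (if k ≤ j then negRec c N y (j - k) else posRec c N y (k - j - 1)))
    rw [show t + ((0:ℕ):ℤ) = t from by omega, hx0, key, hsum]
    have hyt : (-1 : ℤ) - (j:ℤ) = t := by omega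
    rw [hyt]
    field_simp
    ring
lemma actA_surj (d : LaurentPolynomial ℝ) (hd : d ≠ 0) :
    Function.Surjective (actA d : Module.End ℝ (ℤ → ℝ)) := by
  intro y
  have hS : d.coeff.support.Nonempty := Finsupp.support_nonempty_iff.mpr (by simpa using hd)
  set ℓ : ℤ := d.coeff.support.min' hS with hℓ
  set L : ℤ := d.coeff.support.max' hS with hL
  have hℓL : ℓ ≤ L := Finset.min'_le _ _ (d.coeff.support.max'_mem hS)
  set N : ℕ := (L - ℓ).toNat with hN
  set c : ℕ → ℝ := fun k => d.coeff (ℓ + k) with hc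
  have hc0 : c 0 ≠ 0 := by
    have := d.coeff.support.min'_mem hS
    rw [Finsupp.mem_support_iff] at this
    simpa [hc] using this
  have hcN : c N ≠ 0 := by
    have := d.coeff.support.max'_mem hS
    rw [Finsupp.mem_support_iff] at this
    have hl : ℓ + (N : ℤ) = L := by omega
    simpa [hc, hl] using this
  obtain ⟨x', hx'⟩ := core_surj c N hc0 hcN y
  refine ⟨fun s => x' (s - ℓ), ?_⟩
  funext t
  rw [actA_apply]
  have hsub : d.coeff.support ⊆ (Finset.range (N + 1)).map
      ⟨fun k : ℕ => ℓ + (k : ℤ), fun a b hab => by simpa using hab⟩ := by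
    intro j hj
    have h1 : ℓ ≤ j := Finset.min'_le _ _ hj
    have h2 : j ≤ L := Finset.le_max' _ _ hj
    simp only [Finset.mem_map, Finset.mem_range, Function.Embedding.coeFn_mk]
    exact ⟨(j - ℓ).toNat, by omega, by show ℓ + ((j - ℓ).toNat : ℤ) = j; omega⟩
  rw [Finsupp.sum_of_support_subset d.coeff hsub _ (by intros; simp)]
  simp only [Finset.sum_map, Function.Embedding.coeFn_mk]
  have : ∀ k ∈ Finset.range (N + 1),
      d.coeff (ℓ + (k:ℤ)) * x' (t + (ℓ + (k:ℤ)) - ℓ) = c k * x' (t + k) := by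
    intro k _
    rw [show t + (ℓ + (k:ℤ)) - ℓ = t + (k:ℤ) from by ring]
  show ∑ x ∈ Finset.range (N + 1), d.coeff (ℓ + (x:ℤ)) * x' (t + (ℓ + (x:ℤ)) - ℓ) = y t
  rw [Finset.sum_congr rfl this, hx' t]

-- measurability of level sets of shiftOp
lemma level_measurable {p' n : ℕ} (Rr : Matrix (Fin p') (Fin n) (LaurentPolynomial ℝ))
    (z : ℤ → Fin p' → ℝ) :
    @MeasurableSet _ (borel (ℤ → Fin n → ℝ)) {w | shiftOp Rr w = z} := by
  letI : MeasurableSpace (ℤ → Fin n → ℝ) := borel _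
  haveI : BorelSpace (ℤ → Fin n → ℝ) := ⟨rfl⟩
  have : {w : ℤ → Fin n → ℝ | shiftOp Rr w = z} =
      ⋂ (t : ℤ), ⋂ (i : Fin p'), {w | shiftOp Rr w t i = z t i} := by
    ext w
    simp only [Set.mem_setOf_eq, Set.mem_iInter, funext_iff]
  rw [this]
  refine MeasurableSet.iInter fun t => MeasurableSet.iInter fun i => ?_
  have hc : Continuous fun w : ℤ → Fin n → ℝ => shiftOp Rr w t i := by
    simp only [shiftOp, Finsupp.sum]
    refine continuous_finset_sum _ fun j _ => continuous_finset_sum _ fun k _ => ?_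
    exact continuous_const.mul ((continuous_apply j).comp (continuous_apply (t + k)))
  exact (isClosed_singleton.preimage hc).measurableSet

-- witness: a nonzero row gives a sequence not killed by shiftOp
lemma witness_exists {n : ℕ} (Rr : Matrix (Fin 1) (Fin n) (LaurentPolynomial ℝ))
    (j₀ : Fin n) (hj : Rr 0 j₀ ≠ 0) :
    ∃ w : ℤ → Fin n → ℝ, shiftOp Rr w ≠ 0 := by
  classical
  obtain ⟨k₀, hk₀⟩ := Finsupp.support_nonempty_iff.mpr (by simpa using hj : (Rr 0 j₀).coeff ≠ 0)
  refine ⟨fun s j => if s = 0 ∧ j = j₀ then 1 else 0, fun h0 => ?_⟩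
  have h := congrFun (congrFun h0 (-k₀)) 0
  rw [shiftOp] at h
  simp only [Pi.zero_apply] at h
  rw [Finset.sum_eq_single j₀] at h
  · rw [Finsupp.sum] at h
    have : ∀ k ∈ (Rr 0 j₀).coeff.support,
        (Rr 0 j₀).coeff k * (if -k₀ + k = 0 ∧ j₀ = j₀ then (1:ℝ) else 0)
        = if k = k₀ then (Rr 0 j₀).coeff k else 0 := by
      intro k _
      by_cases hk : k = k₀
      · simp [hk]
      · have hne : -k₀ + k ≠ 0 := by omega
        simp [hne, hk]
    rw [Finset.sum_congr rfl this, Finset.sum_ite_eq' _ k₀ _, if_pos hk₀] at h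
    exact Finsupp.mem_support_iff.mp hk₀ h
  · intro j _ hjj
    rw [Finsupp.sum]
    apply Finset.sum_eq_zero
    intro k _
    have : ¬ (-k₀ + k = 0 ∧ j = j₀) := fun hc => hjj hc.2
    simp [this]
  · intro hmem
    exact absurd (Finset.mem_univ j₀) hmem

-- abstract complementarity from decomposability
section Abstract
variable {α : Type*} [AddCommGroup α]

lemma mem_of_sat {E L : Set α} (hs : E + L = E) {x l : α} (hx : x ∈ E) (hl : l ∈ L) :
    x + l ∈ E := by
  rw [← hs]; exact Set.add_mem_add hx hl

lemma sub_incl {L₁ L₂ : Set α}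
    (hneg₁ : ∀ x ∈ L₁, -x ∈ L₁)
    (hdec : ∀ v : α, ∃ a, a ∈ L₁ ∧ v - a ∈ L₂)
    {E₁ E₂ E₁' E₂' : Set α}
    (s₁ : E₁ + L₁ = E₁) (s₂ : E₂ + L₂ = E₂) (s₁' : E₁' + L₁ = E₁')
    (ne₂ : E₂.Nonempty) (hI : E₁ ∩ E₂ = E₁' ∩ E₂') : E₁ ⊆ E₁' := by
  intro x hx
  obtain ⟨y, hy⟩ := ne₂
  obtain ⟨a, ha1, ha2⟩ := hdec (x - y)
  have hz₁ : x + (-a) ∈ E₁ := mem_of_sat s₁ hx (hneg₁ a ha1)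
  have hz₂ : x + (-a) ∈ E₂ := by
    have := mem_of_sat s₂ hy ha2
    have heq : y + (x - y - a) = x + (-a) := by abel
    rwa [heq] at this
  have hz : x + (-a) ∈ E₁' ∩ E₂' := by rw [← hI]; exact ⟨hz₁, hz₂⟩
  have := mem_of_sat s₁' hz.1 ha1
  rwa [show x + (-a) + a = x by abel] at this

lemma comp_abstract {L₁ L₂ : Set α}
    (hneg₁ : ∀ x ∈ L₁, -x ∈ L₁) (hneg₂ : ∀ x ∈ L₂, -x ∈ L₂)
    (hdec : ∀ v : α, ∃ a, a ∈ L₁ ∧ v - a ∈ L₂)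
    {E₁ E₂ E₁' E₂' : Set α}
    (s₁ : E₁ + L₁ = E₁) (s₂ : E₂ + L₂ = E₂) (s₁' : E₁' + L₁ = E₁') (s₂' : E₂' + L₂ = E₂')
    (ne₁ : E₁.Nonempty) (ne₁' : E₁'.Nonempty) (ne₂ : E₂.Nonempty) (ne₂' : E₂'.Nonempty)
    (hI : E₁ ∩ E₂ = E₁' ∩ E₂') : E₁ = E₁' ∧ E₂ = E₂' := by
  have hdec₂ : ∀ v : α, ∃ a, a ∈ L₂ ∧ v - a ∈ L₁ := by
    intro v
    obtain ⟨a, ha1, ha2⟩ := hdec v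
    exact ⟨v - a, ha2, by simpa using ha1⟩
  constructor
  · apply Set.Subset.antisymm
    · exact sub_incl hneg₁ hdec s₁ s₂ s₁' ne₂ hI
    · exact sub_incl hneg₁ hdec s₁' s₂' s₁ ne₂' hI.symm
  · apply Set.Subset.antisymm
    · exact sub_incl hneg₂ hdec₂ s₂ s₁ s₂'
        ne₁ (by rw [Set.inter_comm, hI, Set.inter_comm])
    · exact sub_incl hneg₂ hdec₂ s₂' s₁' s₂
        ne₁' (by rw [Set.inter_comm, hI.symm, Set.inter_comm])
end Abstract
section LA
variable {K : Type*} [Field K] {ι : Type*} [Fintype ι] [DecidableEq ι] {n : ℕ}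

lemma rank_finrank_vecMul (M : Matrix ι (Fin n) K) :
    Module.finrank K (LinearMap.range M.vecMulLinear) = M.rank := by
  rw [range_vecMulLinear, Matrix.rank_eq_finrank_span_row]

lemma full_rank_vecMul_inj (M : Matrix ι (Fin n) K) (h : M.rank = Fintype.card ι)
    (v : ι → K) (hv : Matrix.vecMul v M = 0) : v = 0 := by
  have hker : LinearMap.ker M.vecMulLinear = ⊥ := by
    have h1 := LinearMap.finrank_range_add_finrank_ker M.vecMulLinear
    rw [rank_finrank_vecMul, h, Module.finrank_pi] at h1
    have : Module.finrank K (LinearMap.ker M.vecMulLinear) = 0 := by omega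
    exact Submodule.finrank_eq_zero.mp this
  have : v ∈ LinearMap.ker M.vecMulLinear := by
    rw [LinearMap.mem_ker, Matrix.vecMulLinear_apply, hv]
  rwa [hker, Submodule.mem_bot] at this

lemma low_rank_vecMul_ker (M : Matrix ι (Fin n) K) (h : M.rank < Fintype.card ι) :
    ∃ v : ι → K, v ≠ 0 ∧ Matrix.vecMul v M = 0 := by
  have hker : LinearMap.ker M.vecMulLinear ≠ ⊥ := by
    intro hbot
    have h1 := LinearMap.finrank_range_add_finrank_ker M.vecMulLinear
    rw [rank_finrank_vecMul, hbot, finrank_bot, Module.finrank_pi] at h1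
    omega
  obtain ⟨v, hv, hv0⟩ := Submodule.exists_mem_ne_zero_of_ne_bot hker
  exact ⟨v, hv0, by rwa [LinearMap.mem_ker, Matrix.vecMulLinear_apply] at hv⟩

lemma full_rank_right_inv (M : Matrix ι (Fin n) K) (h : M.rank = Fintype.card ι) :
    ∃ T : Matrix (Fin n) ι K, M * T = 1 := by
  have hrange : LinearMap.range M.mulVecLin = ⊤ := by
    apply Submodule.eq_top_of_finrank_eq
    rw [← Matrix.rank, h, Module.finrank_pi]
  have hsurj : Function.Surjective M.mulVecLin := LinearMap.range_eq_top.mp hrange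
  refine ⟨Matrix.of fun k j => Function.surjInv hsurj (Pi.single j 1) k, ?_⟩
  ext i j
  rw [Matrix.mul_apply]
  have : ∑ k, M i k * Function.surjInv hsurj (Pi.single j 1) k
      = M.mulVecLin (Function.surjInv hsurj (Pi.single j 1)) i := by
    rw [Matrix.mulVecLin_apply]; rfl
  simp only [Matrix.of_apply]
  rw [this, Function.surjInv_eq hsurj, Pi.single_apply, Matrix.one_apply]
end LA

section Clear
local notation "LP" => LaurentPolynomial ℝ
local notation "K" => FractionRing (LaurentPolynomial ℝ)

lemma clear_denoms {ι : Type*} [Fintype ι] (f : ι → K) :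
    ∃ b : LP, b ≠ 0 ∧ ∀ i, ∃ a : LP,
      algebraMap LP K a = algebraMap LP K b * f i := by
  obtain ⟨b, hb⟩ := IsLocalization.exist_integer_multiples_of_finite
    (nonZeroDivisors LP) f
  refine ⟨(b : LP), nonZeroDivisors.coe_ne_zero b, fun i => ?_⟩
  obtain ⟨a, ha⟩ := hb i
  refine ⟨a, ?_⟩
  rw [ha, Algebra.smul_def]

lemma normal_full_right_inv {ι : Type*} [Fintype ι] [DecidableEq ι] {n : ℕ}
    (M : Matrix ι (Fin n) LP) (h : normalRank M = Fintype.card ι) :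
    ∃ (S : Matrix (Fin n) ι LP) (d : LP), d ≠ 0 ∧ M * S = d • 1 := by
  classical
  set φ := algebraMap LP K with hφdef
  obtain ⟨T, hT⟩ := full_rank_right_inv (M.map φ) h
  obtain ⟨b, hb0, hb⟩ := clear_denoms (fun kj : Fin n × ι => T kj.1 kj.2)
  choose S hS using fun kj : Fin n × ι => hb kj
  refine ⟨Matrix.of fun k j => S (k, j), b, hb0, ?_⟩
  have hφ : Function.Injective φ := IsFractionRing.injective LP K
  refine Matrix.ext fun i j => hφ ?_
  have lhs : φ ((M * Matrix.of fun k j => S (k, j)) i j)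
      = φ b * (M.map φ * T) i j := by
    rw [Matrix.mul_apply, map_sum, Matrix.mul_apply, Finset.mul_sum]
    apply Finset.sum_congr rfl
    intro k _
    rw [map_mul, Matrix.of_apply, hS (k, j), Matrix.map_apply]
    ring
  rw [lhs, hT]
  rw [Matrix.smul_apply, smul_eq_mul, map_mul]
  congr 1
  by_cases hij : i = j <;> simp [Matrix.one_apply, hij]
end Clear

section Glue
local notation "LP" => LaurentPolynomial ℝ
local notation "K" => FractionRing (LaurentPolynomial ℝ)
local notation "φ" => algebraMap (LaurentPolynomial ℝ) (FractionRing (LaurentPolynomial ℝ))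

lemma shiftOp_zero_mat {p n : ℕ} (w : ℤ → Fin n → ℝ) :
    shiftOp (0 : Matrix (Fin p) (Fin n) LP) w = 0 := by
  funext t i
  simp [shiftOp]

lemma shiftOp_smul_one {p : ℕ} (d : LP) (w : ℤ → Fin p → ℝ) (t : ℤ) (i : Fin p) :
    shiftOp (d • (1 : Matrix (Fin p) (Fin p) LP)) w t i = actA d (fun s => w s i) t := by
  have h1 : ∀ j, (d • (1 : Matrix (Fin p) (Fin p) LP)) i j = if i = j then d else 0 := by
    intro j
    by_cases h : i = j <;> simp [Matrix.one_apply, h]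
  simp only [shiftOp_eq, h1]
  have h2 : ∀ j : Fin p, actA (if i = j then d else 0) (fun s => w s j) t
      = if i = j then actA d (fun s => w s j) t else 0 := by
    intro j
    by_cases h : i = j <;> simp [h]
  rw [Finset.sum_congr rfl fun j _ => h2 j, Finset.sum_ite_eq, if_pos (Finset.mem_univ i)]

lemma vecMul_map {ι : Type*} [Fintype ι] {n : ℕ} (v : ι → LP) (M : Matrix ι (Fin n) LP) :
    Matrix.vecMul (fun i => φ (v i)) (M.map (φ)) = fun j => φ (Matrix.vecMul v M j) := by
  funext j
  simp [Matrix.vecMul, dotProduct, map_sum, Matrix.map_apply]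

-- decomposition from full stacked rank
lemma decomposition {m p n : ℕ}
    (R₁ : Matrix (Fin m) (Fin n) LP) (R₂ : Matrix (Fin p) (Fin n) LP)
    (hrank : normalRank (Matrix.fromRows R₁ R₂) = m + p) (v : ℤ → Fin n → ℝ) :
    ∃ a, shiftOp R₁ a = 0 ∧ shiftOp R₂ (v - a) = 0 := by
  classical
  obtain ⟨S, d, hd0, hRS⟩ := normal_full_right_inv (Matrix.fromRows R₁ R₂)
    (by rw [hrank]; simp)
  set S₂ : Matrix (Fin n) (Fin p) LP := Matrix.of fun k j => S k (Sum.inr j) with hS₂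
  have h01 : R₁ * S₂ = 0 := by
    refine Matrix.ext fun i j => ?_
    have h := congrFun (congrFun hRS (Sum.inl i)) (Sum.inr j)
    rw [Matrix.mul_apply] at h ⊢
    simp only [Matrix.fromRows_apply_inl] at h
    rw [show ((d • (1 : Matrix (Fin m ⊕ Fin p) (Fin m ⊕ Fin p) LP)) (Sum.inl i) (Sum.inr j)) = 0
      by simp [Matrix.one_apply]] at h
    simpa [hS₂] using h
  have h02 : R₂ * S₂ = d • (1 : Matrix (Fin p) (Fin p) LP) := by
    refine Matrix.ext fun i j => ?_
    have h := congrFun (congrFun hRS (Sum.inr i)) (Sum.inr j)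
    rw [Matrix.mul_apply] at h ⊢
    simp only [Matrix.fromRows_apply_inr] at h
    rw [show ((d • (1 : Matrix (Fin m ⊕ Fin p) (Fin m ⊕ Fin p) LP)) (Sum.inr i) (Sum.inr j))
        = (d • (1 : Matrix (Fin p) (Fin p) LP)) i j by
      by_cases hij : i = j <;> simp [Matrix.one_apply, hij]] at h
    simpa [hS₂] using h
  have hy := fun (i : Fin p) => actA_surj d hd0 (fun t => shiftOp R₂ v t i)
  choose u hu using hy
  set a : ℤ → Fin n → ℝ := shiftOp S₂ (fun t i => u i t) with ha
  have ha1 : shiftOp R₁ a = 0 := by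
    rw [ha, ← shiftOp_mul, h01, shiftOp_zero_mat]
  have ha2 : shiftOp R₂ a = shiftOp R₂ v := by
    rw [ha, ← shiftOp_mul, h02]
    funext t i
    rw [shiftOp_smul_one]
    have : (fun s => u i s) = u i := rfl
    rw [this, hu i]
  exact ⟨a, ha1, by rw [shiftOp_sub, ha2, sub_self]⟩

-- level-set saturation
lemma sat_level {p' n : ℕ} (Rr : Matrix (Fin p') (Fin n) LP) (z : ℤ → Fin p' → ℝ)
    {L : Set (ℤ → Fin n → ℝ)} (hL : ∀ l ∈ L, shiftOp Rr l = 0) (h0 : (0 : ℤ → Fin n → ℝ) ∈ L) :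
    {w | shiftOp Rr w = z} + L = {w | shiftOp Rr w = z} := by
  apply Set.Subset.antisymm
  · rintro x ⟨w, hw, l, hl, rfl⟩
    simp only [Set.mem_setOf_eq] at hw ⊢
    rw [shiftOp_add, hw, hL l hl, add_zero]
  · intro w hw
    exact ⟨w, hw, 0, h0, add_zero w⟩
end Glue

section MainProof
local notation "LP" => LaurentPolynomial ℝ
local notation "Kf" => FractionRing (LaurentPolynomial ℝ)
local notation "φm" => algebraMap (LaurentPolynomial ℝ) (FractionRing (LaurentPolynomial ℝ))

/-- complementarity criterion: let `R₁ ∈ ℝ[z,z⁻¹]^{m×n}` and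
`R₂ ∈ ℝ[z,z⁻¹]^{p×n}` have full row normal ranks `m` and `p`. Let `𝓔₁` be the collection of
Borel subsets of `(ℝⁿ)^ℤ` saturated with respect to `ker∞R₁` (i.e. `E + ker∞R₁ = E`), and
`𝓔₂` the collection of Borel subsets saturated with respect to `ker∞R₂`. Then `𝓔₁` and `𝓔₂`
are complementary (for all nonempty `E₁, E₁' ∈ 𝓔₁` and nonempty `E₂, E₂' ∈ 𝓔₂` with
`E₁ ∩ E₂ = E₁' ∩ E₂'` one has `E₁ = E₁'` and `E₂ = E₂'`) if and only if the stacked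
`(m+p)×n` Laurent polynomial matrix `[R₁; R₂]` has normal rank `m + p`. -/
theorem complementarity_criterion (m p n : ℕ)
    (R₁ : Matrix (Fin m) (Fin n) (LaurentPolynomial ℝ))
    (R₂ : Matrix (Fin p) (Fin n) (LaurentPolynomial ℝ))
    (h₁ : normalRank R₁ = m) (h₂ : normalRank R₂ = p)
    (𝓔₁ 𝓔₂ : Set (Set (ℤ → Fin n → ℝ)))
    (h𝓔₁ : 𝓔₁ = {E : Set (ℤ → Fin n → ℝ) | @MeasurableSet _ (borel (ℤ → Fin n → ℝ)) E ∧
      E + {w : ℤ → Fin n → ℝ | shiftOp R₁ w = 0} = E})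
    (h𝓔₂ : 𝓔₂ = {E : Set (ℤ → Fin n → ℝ) | @MeasurableSet _ (borel (ℤ → Fin n → ℝ)) E ∧
      E + {w : ℤ → Fin n → ℝ | shiftOp R₂ w = 0} = E}) :
    (∀ E₁ E₁' E₂ E₂' : Set (ℤ → Fin n → ℝ),
        E₁ ∈ 𝓔₁ → E₁' ∈ 𝓔₁ → E₂ ∈ 𝓔₂ → E₂' ∈ 𝓔₂ →
        E₁.Nonempty → E₁'.Nonempty → E₂.Nonempty → E₂'.Nonempty →
        E₁ ∩ E₂ = E₁' ∩ E₂' → E₁ = E₁' ∧ E₂ = E₂') ↔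
      normalRank (Matrix.fromRows R₁ R₂) = m + p := by
  classical
  subst h𝓔₁ h𝓔₂
  set L₁ : Set (ℤ → Fin n → ℝ) := {w | shiftOp R₁ w = 0} with hL₁
  set L₂ : Set (ℤ → Fin n → ℝ) := {w | shiftOp R₂ w = 0} with hL₂
  have h0L₁ : (0 : ℤ → Fin n → ℝ) ∈ L₁ := by
    simp only [hL₁, Set.mem_setOf_eq, shiftOp_zero_w]
  have h0L₂ : (0 : ℤ → Fin n → ℝ) ∈ L₂ := by
    simp only [hL₂, Set.mem_setOf_eq, shiftOp_zero_w]
  constructor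
  · -- complementarity ⇒ full normal rank
    intro hcomp
    by_contra hne
    have hφ : Function.Injective (φm) := IsFractionRing.injective LP Kf
    set MK := (Matrix.fromRows R₁ R₂).map (φm) with hMK
    have hle : MK.rank ≤ m + p := by
      have := Matrix.rank_le_card_height MK
      simpa using this
    have hlt : MK.rank < Fintype.card (Fin m ⊕ Fin p) := by
      simp only [Fintype.card_sum, Fintype.card_fin]
      exact lt_of_le_of_ne hle (by simpa [normalRank, hMK] using hne)
    obtain ⟨v, hv0, hv⟩ := low_rank_vecMul_ker MK hlt
    obtain ⟨b, hb0, hb⟩ := clear_denoms v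
    choose Vc hVc using hb
    have hφb : (φm) b ≠ 0 := fun hc => hb0 (hφ (by rw [hc, map_zero]))
    have hVcne : Vc ≠ 0 := by
      intro h
      apply hv0
      funext i
      simp only [Pi.zero_apply]
      have h' := hVc i
      have hVci : Vc i = 0 := by rw [h]; simp
      rw [hVci, map_zero] at h'
      exact (mul_eq_zero.mp h'.symm).resolve_left hφb
    have hVmul : Matrix.vecMul Vc (Matrix.fromRows R₁ R₂) = 0 := by
      funext j
      simp only [Pi.zero_apply]
      apply hφ
      rw [map_zero]
      have h1 : (φm) (Matrix.vecMul Vc (Matrix.fromRows R₁ R₂) j)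
          = Matrix.vecMul (fun i => (φm) (Vc i)) MK j := by
        rw [vecMul_map]
      rw [h1]
      calc Matrix.vecMul (fun i => (φm) (Vc i)) MK j
          = ∑ i, ((φm) b * v i) * MK i j := by
            simp only [Matrix.vecMul, dotProduct, hVc]
        _ = (φm) b * ∑ i, v i * MK i j := by
            rw [Finset.mul_sum]; exact Finset.sum_congr rfl fun i _ => by ring
        _ = (φm) b * Matrix.vecMul v MK j := by
            simp only [Matrix.vecMul, dotProduct]
        _ = 0 := by rw [congrFun hv j]; simp
    set F : Fin m → LP := fun i => Vc (Sum.inl i) with hF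
    set G : Fin p → LP := fun i => Vc (Sum.inr i) with hG
    have hFG : ∀ j, Matrix.vecMul F R₁ j + Matrix.vecMul G R₂ j = 0 := by
      intro j
      have h' := congrFun hVmul j
      simp only [Matrix.vecMul, dotProduct, Fintype.sum_sum_type,
        Matrix.fromRows_apply_inl, Matrix.fromRows_apply_inr, Pi.zero_apply] at h' ⊢
      exact h'
    have hinj : ∀ (q : ℕ) (R : Matrix (Fin q) (Fin n) LP), normalRank R = q →
        ∀ w : Fin q → LP, Matrix.vecMul w R = 0 → w = 0 := by
      intro q R hR w hw
      have hker : Matrix.vecMul (fun i => (φm) (w i)) (R.map (φm)) = 0 := by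
        rw [vecMul_map]
        funext j
        rw [congrFun hw j]
        simp
      have hz := full_rank_vecMul_inj (R.map (φm))
        (by simpa [normalRank, Fintype.card_fin] using hR) _ hker
      funext i
      exact hφ (by rw [congrFun hz i]; simp)
    have hFne : F ≠ 0 := by
      intro hF0
      have hG0 : Matrix.vecMul G R₂ = 0 := by
        funext j
        simp only [Pi.zero_apply]
        have hFv : Matrix.vecMul F R₁ = 0 := by rw [hF0]; simp
        have h' := hFG j
        rw [hFv] at h'
        simpa using h'
      have hGz := hinj p R₂ h₂ G hG0
      apply hVcne
      funext i
      cases i with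
      | inl i => exact congrFun hF0 i
      | inr i => exact congrFun hGz i
    have hrne : Matrix.vecMul F R₁ ≠ 0 := fun hc => hFne (hinj m R₁ h₁ F hc)
    obtain ⟨j₀, hj₀⟩ := Function.ne_iff.mp hrne
    set Rr : Matrix (Fin 1) (Fin n) LP := Matrix.of fun _ j => Matrix.vecMul F R₁ j with hRr
    have hker₁ : ∀ w ∈ L₁, shiftOp Rr w = 0 := by
      intro w hw
      have hfac : Rr = (Matrix.of fun (_ : Fin 1) i => F i) * R₁ := by
        refine Matrix.ext fun o j => ?_
        rw [Matrix.mul_apply]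
        simp [hRr, Matrix.vecMul, dotProduct]
      rw [hfac, shiftOp_mul, hw, shiftOp_zero_w]
    have hker₂ : ∀ w ∈ L₂, shiftOp Rr w = 0 := by
      intro w hw
      have hfac : Rr = -((Matrix.of fun (_ : Fin 1) i => G i) * R₂) := by
        refine Matrix.ext fun o j => ?_
        rw [Matrix.neg_apply, Matrix.mul_apply]
        have h' := hFG j
        simp only [hRr, Matrix.of_apply, Matrix.vecMul, dotProduct] at h' ⊢
        exact eq_neg_of_add_eq_zero_left h'
      rw [hfac, shiftOp_matneg, shiftOp_mul, hw, shiftOp_zero_w, neg_zero]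
    obtain ⟨w₀, hw₀⟩ := witness_exists Rr j₀ (by simpa [hRr] using hj₀)
    set C : Set (ℤ → Fin n → ℝ) := {w | shiftOp Rr w = 0} with hC
    set D : Set (ℤ → Fin n → ℝ) := {w | shiftOp Rr w = shiftOp Rr w₀} with hD
    have hCsat₁ : C + L₁ = C := sat_level Rr 0 hker₁ h0L₁
    have hCsat₂ : C + L₂ = C := sat_level Rr 0 hker₂ h0L₂
    have hCDsat₁ : (C ∪ D) + L₁ = C ∪ D := by
      rw [Set.union_add, sat_level Rr 0 hker₁ h0L₁, sat_level Rr _ hker₁ h0L₁]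
    have h0C : (0 : ℤ → Fin n → ℝ) ∈ C := by
      simp only [hC, Set.mem_setOf_eq, shiftOp_zero_w]
    have hmem₁ : C ∈ {E : Set (ℤ → Fin n → ℝ) |
        @MeasurableSet _ (borel (ℤ → Fin n → ℝ)) E ∧ E + L₁ = E} :=
      ⟨level_measurable Rr 0, hCsat₁⟩
    have hmem₁' : (C ∪ D) ∈ {E : Set (ℤ → Fin n → ℝ) |
        @MeasurableSet _ (borel (ℤ → Fin n → ℝ)) E ∧ E + L₁ = E} :=
      ⟨(level_measurable Rr 0).union (level_measurable Rr (shiftOp Rr w₀)), hCDsat₁⟩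
    have hmem₂ : C ∈ {E : Set (ℤ → Fin n → ℝ) |
        @MeasurableSet _ (borel (ℤ → Fin n → ℝ)) E ∧ E + L₂ = E} :=
      ⟨level_measurable Rr 0, hCsat₂⟩
    have hres := hcomp C (C ∪ D) C C hmem₁ hmem₁' hmem₂ hmem₂
      ⟨0, h0C⟩ ⟨0, Or.inl h0C⟩ ⟨0, h0C⟩ ⟨0, h0C⟩
      (by rw [Set.inter_self, Set.union_inter_cancel_left])
    have hCD : C = C ∪ D := hres.1
    have : w₀ ∈ C := by
      rw [hCD]
      exact Or.inr (by simp [hD])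
    exact hw₀ this
  · -- full normal rank ⇒ complementarity
    intro hrank E₁ E₁' E₂ E₂' hE₁ hE₁' hE₂ hE₂' ne₁ ne₁' ne₂ ne₂' hI
    have hneg₁ : ∀ x ∈ L₁, -x ∈ L₁ := by
      intro x hx
      simp only [hL₁, Set.mem_setOf_eq] at hx ⊢
      rw [shiftOp_neg, hx, neg_zero]
    have hneg₂ : ∀ x ∈ L₂, -x ∈ L₂ := by
      intro x hx
      simp only [hL₂, Set.mem_setOf_eq] at hx ⊢
      rw [shiftOp_neg, hx, neg_zero]
    have hdec : ∀ v : ℤ → Fin n → ℝ, ∃ a, a ∈ L₁ ∧ v - a ∈ L₂ := by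
      intro v
      obtain ⟨a, ha1, ha2⟩ := decomposition R₁ R₂ hrank v
      exact ⟨a, ha1, ha2⟩
    exact comp_abstract hneg₁ hneg₂ hdec hE₁.2 hE₂.2 hE₁'.2 hE₂'.2 ne₁ ne₁' ne₂ ne₂' hI


end MainProof
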